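/- Let m ∈ ℕ, (i_1, …, i_m) ∈ N^m and a ∈ A. Let w be the σ-composite of the word (i_1, …, i_m) at a and let b := i_1⋯i_m ▷ a be its target. Then the length ℓ of the word (i_1, …, i_m) at a equals the cardinality |w(R⁺_a) ∩ (−R⁺_b)|. -/

import Mathlib

open Pointwise

variable {N : Type*} {A : Type*}

/-- The element `(i j)^m ▷ a` for the action of `F₂(N)` on `A`. -/
def altIter (act : N → A → A) (i j : N) (a : A) : ℕ → A
  | 0 => a
  | m + 1 => act i (act j (altIter act i j a m))

/-- The set `Θ(i,j;a)`. -/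
def ThetaSet (act : N → A → A) (i j : N) (a : A) : Set A :=
  {x | ∃ m : ℕ, x = altIter act i j a m ∨ x = altIter act j i a m}

/-- The set of `ℕ₀`-linear combinations of elements of `s`. -/
def NSpan (s : Set (N →₀ ℝ)) : Set (N →₀ ℝ) :=
  (AddSubmonoid.closure s : Set (N →₀ ℝ))

/-- A generalized root system: a transitive action of `F₂(N)` on `A` (axiom (1)),
roots `root a ⊆ ℝ^{(N)}` with simple roots `α n a` forming a basis (axiom (2)),
and maps `σ i a ∈ GL(ℝ^{(N)})`, satisfying axioms (3)-(7). -/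
structure GRS (N : Type*) (A : Type*) where
  act : N → A → A
  act_invol : ∀ n a, act n (act n a) = a
  act_trans : ∀ a b : A, ∃ l : List N, l.foldr act a = b
  root : A → Set (N →₀ ℝ)
  α : N → A → N →₀ ℝ
  α_mem : ∀ n a, α n a ∈ root a
  α_indep : ∀ a, LinearIndependent ℝ fun n => α n a
  α_span : ∀ a, Submodule.span ℝ (Set.range fun n => α n a) = ⊤
  σ : N → A → (N →₀ ℝ) ≃ₗ[ℝ] (N →₀ ℝ)
  ax3 : ∀ a, root a =
    root a ∩ NSpan (Set.range fun n => α n a) ∪ -(root a ∩ NSpan (Set.range fun n => α n a))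
  ax4 : ∀ i a, (Set.range fun r : ℝ => r • α i a) ∩ root a = {α i a, -α i a}
  ax5_root : ∀ i a, ⇑(σ i a) '' root a = root (act i a)
  ax5_diag : ∀ i a, σ i a (α i a) = -α i (act i a)
  ax5_off : ∀ i a j, j ≠ i →
    ∃ m : ℕ, σ i a (α j a) = α j (act i a) + (m : ℝ) • α i (act i a)
  ax6 : ∀ i a v, σ i (act i a) (σ i a v) = v
  ax7 : ∀ a (i j : N), i ≠ j →
    (root a ∩ {β | ∃ p q : ℕ, β = (p : ℝ) • α i a + (q : ℝ) • α j a}).Finite →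
    (ThetaSet act i j a).Finite ∧
      (ThetaSet act i j a).ncard ∣
        (root a ∩ {β | ∃ p q : ℕ, β = (p : ℝ) • α i a + (q : ℝ) • α j a}).ncard

/-- The positive roots `R⁺_a`. -/
def GRS.pos (G : GRS N A) (a : A) : Set (N →₀ ℝ) :=
  G.root a ∩ NSpan (Set.range fun n => G.α n a)

/-- The target `i₁ ⋯ i_m ▷ a` of the word `(i₁, …, i_m)` at `a`. -/
def GRS.target (G : GRS N A) (l : List N) (a : A) : A :=
  l.foldr G.act a

/-- The σ-composite `σ_{i₁,b₁} ∘ ⋯ ∘ σ_{i_m,b_m}` of the word `(i₁, …, i_m)` at `a`. -/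
noncomputable def GRS.wmap (G : GRS N A) : List N → A → (N →₀ ℝ) ≃ₗ[ℝ] (N →₀ ℝ)
  | [], _ => LinearEquiv.refl ℝ _
  | i :: l, a => (G.wmap l a).trans (G.σ i (G.target l a))

/-- The length `ℓ` of a word at `a`: the minimal length of a word at `a`
with the same target and the same σ-composite. -/
noncomputable def GRS.len (G : GRS N A) (l : List N) (a : A) : ℕ :=
  sInf {m | ∃ l' : List N, l'.length = m ∧
    G.target l' a = G.target l a ∧ G.wmap l' a = G.wmap l a}

/-- A word of length `m` at `a` is reduced if `ℓ = m`. -/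
def GRS.Reduced (G : GRS N A) (l : List N) (a : A) : Prop :=
  G.len l a = l.length

/-- `m_{i,j;a} = |R_a ∩ (ℕ₀ α_{i,a} + ℕ₀ α_{j,a})|`. -/
noncomputable def GRS.mij (G : GRS N A) (i j : N) (a : A) : ℕ :=
  (G.root a ∩ {β | ∃ p q : ℕ, β = (p : ℝ) • G.α i a + (q : ℝ) • G.α j a}).ncard

/-- The alternating word `(i₁, …, i_m)` with `i_k = i` for `k` odd (leftmost letter `i`). -/
def altList (i j : N) : ℕ → List N
  | 0 => []
  | m + 1 => i :: altList j i m

/-- The alternating word of length `m` in the letters `i,j` whose rightmost letter is `i`. -/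
def altR (i j : N) : ℕ → List N
  | 0 => []
  | m + 1 => altR j i m ++ [i]

/-- `a_m = i_m ⋯ i_1 ▷ a` for the alternating sequence with `i_k = i` for odd `k`. -/
def aIter (act : N → A → A) (i j : N) (a : A) : ℕ → A
  | 0 => a
  | m + 1 => act (if m % 2 = 0 then i else j) (aIter act i j a m)

/-- The set of real roots `R^{re}_a`. -/
def GRS.reroot (G : GRS N A) (a : A) : Set (N →₀ ℝ) :=
  {β | ∃ (b : A) (l : List N) (n : N), G.target l b = a ∧ β = G.wmap l b (G.α n b)}

/-- The word `C(i,j;a)`: alternating of length `m_{i,j;a} - 1` with leftmost letter `i`. -/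
noncomputable def GRS.Cword (G : GRS N A) (i j : N) (a : A) : List N :=
  altList i j (G.mij i j a - 1)

/-!
Write `Λ(l) = {β ∈ R⁺_a : w(β) ∈ −R⁺_b}` for a word `l` at `a` with σ-composite `w` and target
`b`; the set in the theorem is `w(Λ(l))`. Since `σ_i` permutes `R⁺ \ {α_i}`, prepending a letter to
a word adds one root to `Λ` or removes one, so `|Λ(l)| ≤ length l`; and `Λ` depends only on the
target and the σ-composite, so `|Λ(l)| ≤ ℓ`. Conversely, a word with `|Λ(l)| < length l` has a
suffix `i :: t` with `|Λ(t)| = length t` and `|Λ(i :: t)| < |Λ(t)|`, and the exchange condition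
rewrites `t` as `i :: t'` with `t'` shorter, so that `i :: t` shortens to `t'`.

The exchange condition is proved by induction on the length, pushing the letter `i` through the
longest prefix of `t` alternating in `i` and the first letter `j` of `t`; when it cannot be pushed
further, the braid relation between the two alternating words of length `m_{ij}` finishes the
proof. For the braid relation, the roots `β_r` added by the successive letters of the alternating
word satisfy a three-term recursion with determinant `det(β_r, β_{r+1}) = 1` in the plane of
`α_i, α_j`, and sweeping the plane with them shows that `β_0, …, β_{m-1}` are exactly the positive
roots of the plane, `m` being the first index with `β_m` negative. The two alternating words of
length `m` then have the same target by axiom (7), since `m` is the number of positive roots of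
the plane, and the same σ-composite, since both send `α_i` and `α_j` to the same negative simple
roots and move every other simple root only within the plane.
-/

open Pointwise

section AlternatingWords

/-- The letter in position `r + 1`, counted from the right, of the alternating words `altR x y`. -/
def altLetter (x y : N) (r : ℕ) : N := if Even r then x else y

lemma altLetter_succ (x y : N) (r : ℕ) : altLetter x y (r + 1) = altLetter y x r := by
  by_cases h : Even r <;> simp [altLetter, h, Nat.even_add_one]

lemma altLetter_add (x y : N) (n m : ℕ) :
    altLetter x y (n + m) = altLetter (altLetter x y m) (altLetter y x m) n := by
  by_cases hn : Even n <;> by_cases hm : Even m <;> simp [altLetter, hn, hm, Nat.even_add]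

lemma altLetter_add_self (x y : N) (m : ℕ) : altLetter x y (m + m) = x := by
  simp [altLetter]

lemma altLetter_eq_or (x y : N) (r : ℕ) : altLetter x y r = x ∨ altLetter x y r = y := by
  unfold altLetter; split_ifs <;> simp

lemma altLetter_succ_ne {x y : N} (h : x ≠ y) (r : ℕ) :
    altLetter x y (r + 1) ≠ altLetter x y r := by
  by_cases hr : Even r <;> simp [altLetter, hr, Nat.even_add_one, h, h.symm]

lemma altR_succ_eq_cons (x y : N) (r : ℕ) : altR x y (r + 1) = altLetter x y r :: altR x y r := by
  induction r generalizing x y with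
  | zero => rfl
  | succ r ih => rw [altR, ih, altLetter_succ]; rfl

@[simp] lemma length_altR (x y : N) (r : ℕ) : (altR x y r).length = r := by
  induction r with
  | zero => rfl
  | succ r ih => rw [altR_succ_eq_cons, List.length_cons, ih]

lemma altR_subset (x y : N) (r : ℕ) : altR x y r ⊆ [x, y] := by
  induction r with
  | zero => exact List.nil_subset _
  | succ r ih =>
    rw [altR_succ_eq_cons]
    refine List.cons_subset.mpr ⟨?_, ih⟩
    rcases altLetter_eq_or x y r with h | h <;> simp [h]

lemma altR_add (x y : N) (n m : ℕ) :
    altR x y (n + m) = altR (altLetter x y m) (altLetter y x m) n ++ altR x y m := by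
  induction n with
  | zero => simp [altR]
  | succ n ih =>
    rw [Nat.add_right_comm, altR_succ_eq_cons, ih, altR_succ_eq_cons, altLetter_add]
    rfl

lemma reverse_altR (x y : N) (m : ℕ) :
    (altR x y m).reverse = altR (altLetter y x m) (altLetter x y m) m := by
  induction m generalizing x y with
  | zero => rfl
  | succ m ih =>
    rw [altR, List.reverse_append, ih, altLetter_succ, altLetter_succ, altR_succ_eq_cons,
      ← altLetter_add, altLetter_add_self]
    rfl

end AlternatingWords

section ThetaSet

variable {act : N → A → A}

lemma altIter_eq_iterate (i j : N) (a : A) (m : ℕ) :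
    altIter act i j a m = (act i ∘ act j)^[m] a := by
  induction m with
  | zero => rfl
  | succ m ih => rw [Function.iterate_succ_apply', ← ih]; rfl

lemma thetaSet_eq_orbit (hact : ∀ n, Function.Involutive (act n)) (i j : N) (a : A) :
    ThetaSet act i j a =
      MulAction.orbit (Subgroup.zpowers ((hact i).toPerm _ * (hact j).toPerm _)) a := by
  set f := (hact i).toPerm _ * (hact j).toPerm _
  have hf : ∀ m : ℕ, (f ^ m) a = altIter act i j a m := fun m => by
    rw [altIter_eq_iterate, Equiv.Perm.coe_pow]; rfl
  have hf' : ∀ m : ℕ, (f⁻¹ ^ m) a = altIter act j i a m := fun m => by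
    rw [altIter_eq_iterate, Equiv.Perm.coe_pow, mul_inv_rev, Equiv.Perm.inv_def,
      Equiv.Perm.inv_def, Function.Involutive.toPerm_symm, Function.Involutive.toPerm_symm]
    rfl
  ext x
  simp only [ThetaSet, MulAction.mem_orbit_iff, Subtype.exists, Subgroup.mem_zpowers_iff]
  constructor
  · rintro ⟨m, rfl | rfl⟩
    · exact ⟨f ^ m, ⟨m, zpow_natCast f m⟩, hf m⟩
    · exact ⟨f⁻¹ ^ m, ⟨-m, by simp⟩, hf' m⟩
  · rintro ⟨g, ⟨k, rfl⟩, rfl⟩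
    rcases Int.eq_nat_or_neg k with ⟨m, rfl | rfl⟩
    · exact ⟨m, Or.inl (by simp [hf])⟩
    · exact ⟨m, Or.inr (by simp [← hf', inv_pow])⟩

lemma altIter_eq_self_of_ncard_thetaSet_dvd (hact : ∀ n, Function.Involutive (act n))
    {i j : N} {a : A} {m : ℕ} (h : (ThetaSet act i j a).ncard ∣ m) : altIter act i j a m = a := by
  set f := (hact i).toPerm _ * (hact j).toPerm _
  have hcard : (ThetaSet act i j a).ncard = Function.minimalPeriod (f • ·) a := by
    rw [thetaSet_eq_orbit hact, ← Nat.card_coe_set_eq,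
      Nat.card_congr (MulAction.orbitZPowersEquiv f a), Nat.card_zmod]
  rw [hcard, ← Function.isPeriodicPt_iff_minimalPeriod_dvd] at h
  rw [altIter_eq_iterate]
  exact h.eq

end ThetaSet

namespace GRS

variable {G : GRS N A}

local notation "V" => N →₀ ℝ

section Coordinates

variable (G)

noncomputable def simpleBasis (a : A) : Module.Basis N ℝ V :=
  Module.Basis.mk (G.α_indep a) (G.α_span a).ge

@[simp] lemma simpleBasis_apply (a : A) (n : N) : G.simpleBasis a n = G.α n a :=
  Module.Basis.mk_apply _ _ _

noncomputable def coord (a : A) (n : N) : V →ₗ[ℝ] ℝ := (G.simpleBasis a).coord n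

lemma coord_α (a : A) (n m : N) : G.coord a m (G.α n a) = Finsupp.single n 1 m := by
  rw [coord, Module.Basis.coord_apply, ← simpleBasis_apply, Module.Basis.repr_self]

@[simp] lemma coord_α_self (a : A) (n : N) : G.coord a n (G.α n a) = 1 := by
  simp [coord_α]

@[simp] lemma coord_α_of_ne {a : A} {n m : N} (h : n ≠ m) : G.coord a m (G.α n a) = 0 := by
  simp [coord_α, Finsupp.single_eq_of_ne' h]

lemma ext_coord {a : A} {β γ : V} (h : ∀ n, G.coord a n β = G.coord a n γ) : β = γ :=
  (G.simpleBasis a).ext_elem h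

end Coordinates

section Positivity

lemma exists_coord_eq_nat {a : A} {β : V} (h : β ∈ NSpan (Set.range fun n => G.α n a))
    (m : N) : ∃ k : ℕ, G.coord a m β = k := by
  induction h using AddSubmonoid.closure_induction with
  | mem x hx =>
    obtain ⟨n, rfl⟩ := hx
    rcases eq_or_ne n m with rfl | hnm
    · exact ⟨1, by simp⟩
    · exact ⟨0, by simp [hnm]⟩
  | zero => exact ⟨0, by simp⟩
  | add x y _ _ hx hy =>
    obtain ⟨k₁, hk₁⟩ := hx
    obtain ⟨k₂, hk₂⟩ := hy
    exact ⟨k₁ + k₂, by simp [hk₁, hk₂]⟩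

lemma coord_nonneg {a : A} {β : V} (h : β ∈ G.pos a) (m : N) : 0 ≤ G.coord a m β := by
  obtain ⟨k, hk⟩ := exists_coord_eq_nat h.2 m
  exact hk ▸ k.cast_nonneg

lemma mem_pos_or_mem_neg_pos {a : A} {β : V} (h : β ∈ G.root a) :
    β ∈ G.pos a ∨ β ∈ -G.pos a := by
  rwa [G.ax3 a] at h

variable (G) in
lemma α_mem_pos (a : A) (n : N) : G.α n a ∈ G.pos a :=
  ⟨G.α_mem n a, AddSubmonoid.subset_closure ⟨n, rfl⟩⟩

variable (G) in
lemma neg_α_mem_neg_pos (a : A) (n : N) : -G.α n a ∈ -G.pos a := by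
  simpa using G.α_mem_pos a n

lemma eq_α_or_eq_neg_α {a : A} {i : N} {β : V} (hβ : β ∈ G.root a) {r : ℝ}
    (h : β = r • G.α i a) : β = G.α i a ∨ β = -G.α i a := by
  have : β ∈ (Set.range fun r : ℝ => r • G.α i a) ∩ G.root a := ⟨⟨r, h.symm⟩, hβ⟩
  rwa [G.ax4] at this

lemma mem_pos_of_coord_pos {a : A} {β : V} (h : β ∈ G.root a) {m : N}
    (hm : 0 < G.coord a m β) : β ∈ G.pos a := by
  refine (mem_pos_or_mem_neg_pos h).resolve_right fun h' => ?_
  have := coord_nonneg (Set.mem_neg.mp h') m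
  rw [map_neg] at this
  linarith

lemma not_coord_neg_of_coord_pos {a : A} {β : V} (h : β ∈ G.root a) {s t : N}
    (ht : 0 < G.coord a t β) : ¬ G.coord a s β < 0 :=
  not_lt.mpr (coord_nonneg (mem_pos_of_coord_pos h ht) s)

lemma mem_pos_of_nat_smul_add {a : A} {β γ₁ γ₂ : V} (hβ : β ∈ G.root a) (h₁ : γ₁ ∈ G.pos a)
    (h₂ : γ₂ ∈ G.pos a) {p q : ℕ} (h : β = (p : ℝ) • γ₁ + (q : ℝ) • γ₂) : β ∈ G.pos a := by
  refine ⟨hβ, h ▸ ?_⟩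
  rw [Nat.cast_smul_eq_nsmul, Nat.cast_smul_eq_nsmul]
  exact add_mem (AddSubmonoid.nsmul_mem _ h₁.2 p) (AddSubmonoid.nsmul_mem _ h₂.2 q)

variable [Nonempty N]

variable (G) in
lemma zero_notMem_root (a : A) : (0 : V) ∉ G.root a := fun h0 => by
  obtain ⟨i⟩ := ‹Nonempty N›
  rcases eq_α_or_eq_neg_α h0 (zero_smul ℝ (G.α i a)).symm with h | h
  · exact (G.α_indep a).ne_zero i h.symm
  · exact (G.α_indep a).ne_zero i (neg_eq_zero.mp h.symm)

lemma notMem_neg_pos {a : A} {β : V} (h : β ∈ G.pos a) : β ∉ -G.pos a := fun h' => by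
  have hβ : β = 0 := G.ext_coord fun m => by
    have := coord_nonneg (Set.mem_neg.mp h') m
    simp only [map_neg, map_zero] at this ⊢
    linarith [coord_nonneg h m]
  exact G.zero_notMem_root a (hβ ▸ h.1)

end Positivity

section Reflections

lemma coord_σ_of_ne {i j : N} {a : A} (hj : j ≠ i) (v : V) :
    G.coord (G.act i a) j (G.σ i a v) = G.coord a j v := by
  suffices h : (G.coord (G.act i a) j).comp (G.σ i a : V →ₗ[ℝ] V) = G.coord a j from
    LinearMap.congr_fun h v
  refine (G.simpleBasis a).ext fun n => ?_
  simp only [LinearMap.comp_apply, LinearEquiv.coe_coe, simpleBasis_apply]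
  rcases eq_or_ne n i with rfl | hn
  · simp [G.ax5_diag, hj.symm]
  · obtain ⟨k, hk⟩ := G.ax5_off i a n hn
    simp [hk, coord_α, hj.symm]

lemma σ_mem_root {i : N} {a : A} {β : V} (h : β ∈ G.root a) : G.σ i a β ∈ G.root (G.act i a) :=
  G.ax5_root i a ▸ Set.mem_image_of_mem _ h

lemma σ_symm (i : N) (a : A) : (G.σ i a).symm = G.σ i (G.act i a) := by
  ext v : 1
  rw [LinearEquiv.symm_apply_eq]
  simpa [G.act_invol] using (G.ax6 i (G.act i a) v).symm

variable [Nonempty N]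

lemma σ_mem_pos {i : N} {a : A} {β : V} (h : β ∈ G.pos a) (hne : β ≠ G.α i a) :
    G.σ i a β ∈ G.pos (G.act i a) := by
  by_cases hj : ∃ j, j ≠ i ∧ G.coord a j β ≠ 0
  · obtain ⟨j, hji, hβj⟩ := hj
    refine mem_pos_of_coord_pos (σ_mem_root h.1) (m := j) ?_
    rw [coord_σ_of_ne hji]
    exact (coord_nonneg h j).lt_of_ne' hβj
  · push Not at hj
    have hβ : β = G.coord a i β • G.α i a := G.ext_coord (a := a) fun m => by
      rcases eq_or_ne m i with rfl | hm
      · simp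
      · simp [hj m hm, Ne.symm hm]
    rcases eq_α_or_eq_neg_α h.1 hβ with h' | h'
    · exact absurd h' hne
    · exact absurd (h' ▸ G.neg_α_mem_neg_pos a i) (notMem_neg_pos h)

lemma σ_mem_neg_pos_iff {i : N} {a : A} {β : V} (hβ : β ∈ G.root a) :
    G.σ i a β ∈ -G.pos (G.act i a) ↔ (β ∈ -G.pos a ∧ β ≠ -G.α i a) ∨ β = G.α i a := by
  have hdiag : G.σ i a (G.α i a) ∈ -G.pos (G.act i a) := G.ax5_diag i a ▸ G.neg_α_mem_neg_pos _ i
  constructor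
  · intro hneg
    rcases mem_pos_or_mem_neg_pos hβ with hp | hp
    · by_contra hne
      exact notMem_neg_pos (σ_mem_pos hp fun h => hne (Or.inr h)) hneg
    · refine Or.inl ⟨hp, fun h => ?_⟩
      rw [h, map_neg, G.ax5_diag, neg_neg] at hneg
      exact notMem_neg_pos (G.α_mem_pos _ i) hneg
  · rintro (⟨hneg, hne⟩ | rfl)
    · rw [Set.mem_neg, ← map_neg]
      exact σ_mem_pos (Set.mem_neg.mp hneg) fun h => hne (neg_eq_iff_eq_neg.mp h)
    · exact hdiag

end Reflections

section Words

variable (G)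

@[simp] lemma target_nil (a : A) : G.target [] a = a := rfl

@[simp] lemma target_cons (i : N) (l : List N) (a : A) :
    G.target (i :: l) a = G.act i (G.target l a) := rfl

@[simp] lemma wmap_nil (a : A) : G.wmap [] a = LinearEquiv.refl ℝ V := rfl

@[simp] lemma wmap_cons (i : N) (l : List N) (a : A) :
    G.wmap (i :: l) a = (G.wmap l a).trans (G.σ i (G.target l a)) := rfl

lemma target_append (l₁ l₂ : List N) (a : A) :
    G.target (l₁ ++ l₂) a = G.target l₁ (G.target l₂ a) :=
  List.foldr_append

lemma wmap_append (l₁ l₂ : List N) (a : A) :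
    G.wmap (l₁ ++ l₂) a = (G.wmap l₂ a).trans (G.wmap l₁ (G.target l₂ a)) := by
  induction l₁ with
  | nil => rfl
  | cons i l₁ ih => simp only [List.cons_append, wmap_cons, ih, target_append]; rfl

lemma target_reverse (l : List N) (a : A) : G.target l.reverse (G.target l a) = a := by
  induction l generalizing a with
  | nil => rfl
  | cons i l ih => simp [target_append, G.act_invol, ih]

lemma target_target_reverse (l : List N) (a : A) : G.target l (G.target l.reverse a) = a := by
  simpa using G.target_reverse l.reverse a

lemma target_altR_add_self (x y : N) (c : A) (m : ℕ) :
    G.target (altR y x (m + m)) c = altIter G.act x y c m := by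
  induction m with
  | zero => rfl
  | succ m ih =>
    rw [show m + 1 + (m + 1) = m + m + 1 + 1 by omega, altR_succ_eq_cons, altR_succ_eq_cons,
      altLetter_succ, altLetter_add_self, altLetter_add_self]
    simp [ih, altIter]

lemma wmap_reverse (l : List N) (a : A) :
    G.wmap l.reverse (G.target l a) = (G.wmap l a).symm := by
  induction l with
  | nil => rfl
  | cons i l ih =>
    ext v : 1
    simp [wmap_append, G.act_invol, ih, σ_symm]

variable {G}

lemma wmap_mem_root {l : List N} {a : A} {β : V} (h : β ∈ G.root a) :
    G.wmap l a β ∈ G.root (G.target l a) := by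
  induction l with
  | nil => exact h
  | cons i l ih => exact σ_mem_root ih

lemma wmap_symm_mem_root {l : List N} {a : A} {β : V} (h : β ∈ G.root (G.target l a)) :
    (G.wmap l a).symm β ∈ G.root a := by
  simpa [target_reverse, wmap_reverse] using wmap_mem_root (l := l.reverse) h

variable (G) in
def Eqv (a : A) (l l' : List N) : Prop :=
  G.target l' a = G.target l a ∧ G.wmap l' a = G.wmap l a

lemma Eqv.refl (a : A) (l : List N) : G.Eqv a l l := ⟨rfl, rfl⟩

lemma Eqv.trans {a : A} {l₁ l₂ l₃ : List N} (h₁ : G.Eqv a l₁ l₂) (h₂ : G.Eqv a l₂ l₃) :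
    G.Eqv a l₁ l₃ :=
  ⟨h₂.1.trans h₁.1, h₂.2.trans h₁.2⟩

lemma Eqv.append_left {a : A} {t t' : List N} (h : G.Eqv a t t') (w : List N) :
    G.Eqv a (w ++ t) (w ++ t') := by
  obtain ⟨ht, hw⟩ := h
  exact ⟨by rw [target_append, target_append, ht], by rw [wmap_append, wmap_append, ht, hw]⟩

lemma Eqv.append_right {a : A} {w w' : List N} (t : List N) (h : G.Eqv (G.target t a) w w') :
    G.Eqv a (w ++ t) (w' ++ t) := by
  obtain ⟨ht, hw⟩ := h
  exact ⟨by rw [target_append, target_append, ht], by rw [wmap_append, wmap_append, hw]⟩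

variable (G) in
lemma eqv_cons_cons (a : A) (i : N) (t : List N) : G.Eqv a (i :: i :: t) t := by
  refine ⟨by simp [G.act_invol], ?_⟩
  ext v : 1
  exact G.ax6 _ _ _ |>.symm

end Words

section Inversions

variable (G) in
/-- The root that the letter `i` adds to, or whose negative it removes from, the inversion set
when it is prepended to the word `l` at `a`. -/
noncomputable def inversionRoot (i : N) (l : List N) (a : A) : V :=
  (G.wmap l a).symm (G.α i (G.target l a))

variable (G) in
def invSet (l : List N) (a : A) : Set V :=
  {β | β ∈ G.pos a ∧ G.wmap l a β ∈ -G.pos (G.target l a)}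

variable (G) in
/-- A posteriori this is `G.Reduced l a`. -/
def InvReduced (l : List N) (a : A) : Prop :=
  (G.invSet l a).ncard = l.length

variable (G) in
lemma wmap_inversionRoot (i : N) (l : List N) (a : A) :
    G.wmap l a (G.inversionRoot i l a) = G.α i (G.target l a) :=
  LinearEquiv.apply_symm_apply _ _

variable (G) in
lemma inversionRoot_mem_root (i : N) (l : List N) (a : A) : G.inversionRoot i l a ∈ G.root a :=
  wmap_symm_mem_root (G.α_mem _ _)

variable (G) in
lemma inversionRoot_append (i : N) (w t : List N) (a : A) :
    G.inversionRoot i (w ++ t) a = (G.wmap t a).symm (G.inversionRoot i w (G.target t a)) := by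
  simp only [inversionRoot, wmap_append, target_append]
  rfl

lemma Eqv.inversionRoot_eq {a : A} {l l' : List N} (h : G.Eqv a l l') (i : N) :
    G.inversionRoot i l' a = G.inversionRoot i l a := by
  rw [inversionRoot, inversionRoot, h.1, h.2]

lemma Eqv.invSet_eq {a : A} {l l' : List N} (h : G.Eqv a l l') : G.invSet l' a = G.invSet l a := by
  rw [invSet, invSet, h.1, h.2]

lemma neg_inversionRoot_mem_invSet {i : N} {l : List N} {a : A}
    (h : G.inversionRoot i l a ∈ -G.pos a) : -G.inversionRoot i l a ∈ G.invSet l a := by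
  refine ⟨h, ?_⟩
  rw [map_neg, G.wmap_inversionRoot]
  exact G.neg_α_mem_neg_pos _ _

lemma invSet_reverse (l : List N) (a : A) :
    G.invSet l.reverse (G.target l a) = (fun β => -G.wmap l a β) '' G.invSet l a := by
  ext γ
  simp only [invSet, wmap_reverse, target_reverse, Set.mem_image]
  constructor
  · rintro ⟨hγ, hγ'⟩
    refine ⟨-(G.wmap l a).symm γ, ⟨hγ', ?_⟩, by simp⟩
    simpa using hγ
  · rintro ⟨β, ⟨hβ, hβ'⟩, rfl⟩
    exact ⟨hβ', by simpa using hβ⟩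

lemma InvReduced.reverse {l : List N} {a : A} (h : G.InvReduced l a) :
    G.InvReduced l.reverse (G.target l a) := by
  rw [InvReduced, invSet_reverse, List.length_reverse, ← h]
  exact Set.ncard_image_of_injective _ fun β γ he => (G.wmap l a).injective (neg_injective he)

variable [Nonempty N]

variable (G) in
@[simp] lemma invSet_nil (a : A) : G.invSet [] a = ∅ :=
  Set.eq_empty_of_forall_notMem fun _ hβ => notMem_neg_pos hβ.1 hβ.2

@[simp] lemma invReduced_nil (a : A) : G.InvReduced [] a := by
  simp [InvReduced]

lemma mem_invSet_cons_iff {i : N} {l : List N} {a : A} {β : V} :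
    β ∈ G.invSet (i :: l) a ↔
      (β ∈ G.invSet l a ∧ β ≠ -G.inversionRoot i l a) ∨
        (β ∈ G.pos a ∧ β = G.inversionRoot i l a) := by
  have hcons : ∀ β : V, β ∈ G.root a → (G.wmap (i :: l) a β ∈ -G.pos (G.target (i :: l) a) ↔
      (G.wmap l a β ∈ -G.pos (G.target l a) ∧ G.wmap l a β ≠ -G.α i (G.target l a)) ∨
        G.wmap l a β = G.α i (G.target l a)) := fun β hβ =>
    σ_mem_neg_pos_iff (wmap_mem_root hβ)
  have hneg : G.wmap l a β = -G.α i (G.target l a) ↔ β = -G.inversionRoot i l a := by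
    rw [inversionRoot, ← map_neg, LinearEquiv.eq_symm_apply]
  have hroot : G.wmap l a β = G.α i (G.target l a) ↔ β = G.inversionRoot i l a :=
    (LinearEquiv.eq_symm_apply _).symm
  constructor
  · rintro ⟨hβ, h⟩
    rcases (hcons β hβ.1).mp h with ⟨h₁, h₂⟩ | h₁
    · exact Or.inl ⟨⟨hβ, h₁⟩, hneg.not.mp h₂⟩
    · exact Or.inr ⟨hβ, hroot.mp h₁⟩
  · rintro (⟨⟨hβ, h₁⟩, h₂⟩ | ⟨hβ, h₁⟩)
    · exact ⟨hβ, (hcons β hβ.1).mpr (Or.inl ⟨h₁, hneg.not.mpr h₂⟩)⟩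
    · exact ⟨hβ, (hcons β hβ.1).mpr (Or.inr (hroot.mpr h₁))⟩

variable (G) in
lemma inversionRoot_notMem_invSet (i : N) (l : List N) (a : A) :
    G.inversionRoot i l a ∉ G.invSet l a := fun h =>
  notMem_neg_pos (G.α_mem_pos _ i) (G.wmap_inversionRoot i l a ▸ h.2)

lemma invSet_cons_of_mem_pos {i : N} {l : List N} {a : A} (h : G.inversionRoot i l a ∈ G.pos a) :
    G.invSet (i :: l) a = insert (G.inversionRoot i l a) (G.invSet l a) := by
  ext β
  rw [mem_invSet_cons_iff, Set.mem_insert_iff]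
  constructor
  · rintro (⟨hβ, -⟩ | ⟨-, rfl⟩)
    · exact Or.inr hβ
    · exact Or.inl rfl
  · rintro (rfl | hβ)
    · exact Or.inr ⟨h, rfl⟩
    · refine Or.inl ⟨hβ, fun he => notMem_neg_pos hβ.1 ?_⟩
      rw [he, Set.neg_mem_neg]
      exact h

lemma invSet_cons_of_mem_neg_pos {i : N} {l : List N} {a : A}
    (h : G.inversionRoot i l a ∈ -G.pos a) :
    G.invSet (i :: l) a = G.invSet l a \ {-G.inversionRoot i l a} := by
  ext β
  rw [mem_invSet_cons_iff, Set.mem_sdiff, Set.mem_singleton_iff]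
  constructor
  · rintro (hβ | ⟨hβ, rfl⟩)
    · exact hβ
    · exact absurd h (notMem_neg_pos hβ)
  · exact Or.inl

variable (G) in
lemma invSet_finite (l : List N) (a : A) : (G.invSet l a).Finite := by
  induction l with
  | nil => simp
  | cons i l ih =>
    rcases mem_pos_or_mem_neg_pos (G.inversionRoot_mem_root i l a) with h | h
    · exact invSet_cons_of_mem_pos h ▸ ih.insert _
    · exact invSet_cons_of_mem_neg_pos h ▸ ih.sdiff

lemma ncard_invSet_cons_of_mem_pos {i : N} {l : List N} {a : A}
    (h : G.inversionRoot i l a ∈ G.pos a) :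
    (G.invSet (i :: l) a).ncard = (G.invSet l a).ncard + 1 := by
  rw [invSet_cons_of_mem_pos h,
    Set.ncard_insert_of_notMem (G.inversionRoot_notMem_invSet i l a) (G.invSet_finite l a)]

lemma ncard_invSet_cons_of_mem_neg_pos {i : N} {l : List N} {a : A}
    (h : G.inversionRoot i l a ∈ -G.pos a) :
    (G.invSet (i :: l) a).ncard + 1 = (G.invSet l a).ncard := by
  rw [invSet_cons_of_mem_neg_pos h,
    Set.ncard_sdiff_singleton_add_one (neg_inversionRoot_mem_invSet h) (G.invSet_finite l a)]

variable (G) in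
lemma ncard_invSet_cons_le (i : N) (l : List N) (a : A) :
    (G.invSet (i :: l) a).ncard ≤ (G.invSet l a).ncard + 1 := by
  rcases mem_pos_or_mem_neg_pos (G.inversionRoot_mem_root i l a) with h | h
  · exact (ncard_invSet_cons_of_mem_pos h).le
  · have := ncard_invSet_cons_of_mem_neg_pos h
    omega

variable (G) in
lemma ncard_invSet_append_le (x y : List N) (a : A) :
    (G.invSet (x ++ y) a).ncard ≤ x.length + (G.invSet y a).ncard := by
  induction x with
  | nil => simp
  | cons i x ih =>
    have := G.ncard_invSet_cons_le i (x ++ y) a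
    simp only [List.cons_append, List.length_cons]
    omega

variable (G) in
lemma ncard_invSet_le_length (l : List N) (a : A) : (G.invSet l a).ncard ≤ l.length := by
  simpa using G.ncard_invSet_append_le l [] a

lemma invReduced_cons_iff {i : N} {l : List N} {a : A} :
    G.InvReduced (i :: l) a ↔ G.InvReduced l a ∧ G.inversionRoot i l a ∈ G.pos a := by
  unfold InvReduced
  have hle := G.ncard_invSet_le_length l a
  rcases mem_pos_or_mem_neg_pos (G.inversionRoot_mem_root i l a) with h | h
  · simp [ncard_invSet_cons_of_mem_pos h, h]
  · have := ncard_invSet_cons_of_mem_neg_pos h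
    simp only [List.length_cons, notMem_neg_pos.mt (not_not.mpr h), and_false, iff_false]
    omega

lemma InvReduced.suffix {x y : List N} {a : A} (h : G.InvReduced (x ++ y) a) :
    G.InvReduced y a := by
  have h₁ := G.ncard_invSet_append_le x y a
  have h₂ := G.ncard_invSet_le_length y a
  rw [h, List.length_append] at h₁
  exact le_antisymm h₂ (by omega)

lemma InvReduced.prefix {x y : List N} {a : A} (h : G.InvReduced (x ++ y) a) :
    G.InvReduced x (G.target y a) := by
  have h' := h.reverse
  rw [List.reverse_append, target_append] at h'
  simpa [target_reverse] using h'.suffix.reverse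

lemma InvReduced.length_le {l l' : List N} {a : A} (h : G.InvReduced l a) (he : G.Eqv a l l') :
    l.length ≤ l'.length :=
  h ▸ he.invSet_eq ▸ G.ncard_invSet_le_length l' a

lemma InvReduced.of_eqv {l l' : List N} {a : A} (h : G.InvReduced l a) (he : G.Eqv a l l')
    (hlen : l'.length ≤ l.length) : G.InvReduced l' a := by
  rw [InvReduced, he.invSet_eq, h]
  exact le_antisymm (h.length_le he) hlen

lemma exists_eq_append_of_not_invReduced {l : List N} {a : A} (h : ¬ G.InvReduced l a) :
    ∃ pre i t, l = pre ++ i :: t ∧ G.InvReduced t a ∧ G.inversionRoot i t a ∈ -G.pos a := by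
  induction l with
  | nil => simp [InvReduced] at h
  | cons i l ih =>
    by_cases hl : G.InvReduced l a
    · refine ⟨[], i, l, rfl, hl, ?_⟩
      refine (mem_pos_or_mem_neg_pos (G.inversionRoot_mem_root i l a)).resolve_left fun hp => ?_
      exact h (invReduced_cons_iff.mpr ⟨hl, hp⟩)
    · obtain ⟨pre, j, t, rfl, ht, hneg⟩ := ih hl
      exact ⟨i :: pre, j, t, rfl, ht, hneg⟩

end Inversions

section Plane

variable (G) in
noncomputable def plane (x y : N) (c : A) : Submodule ℝ V := Submodule.span ℝ {G.α x c, G.α y c}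

variable {x y : N} {c : A}

lemma mem_plane_iff {β : V} : β ∈ G.plane x y c ↔ ∀ n, n ≠ x → n ≠ y → G.coord c n β = 0 := by
  have : G.plane x y c = Submodule.span ℝ (G.simpleBasis c '' {x, y}) := by
    simp [plane, Set.image_pair]
  rw [this, Module.Basis.mem_span_image]
  simp only [Set.subset_def, Finset.mem_coe, Finsupp.mem_support_iff, Set.mem_insert_iff,
    Set.mem_singleton_iff, coord, Module.Basis.coord_apply]
  constructor
  · intro h n hx hy
    by_contra hne
    rcases h n hne with rfl | rfl <;> contradiction
  · intro h n hn
    by_contra hne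
    push Not at hne
    exact hn (h n hne.1 hne.2)

lemma α_mem_plane_left : G.α x c ∈ G.plane x y c :=
  Submodule.subset_span (Set.mem_insert _ _)

lemma α_mem_plane_right : G.α y c ∈ G.plane x y c :=
  Submodule.subset_span (Set.mem_insert_of_mem _ rfl)

lemma α_mem_plane_of_eq_or {i : N} (hi : i = x ∨ i = y) : G.α i c ∈ G.plane x y c := by
  rcases hi with rfl | rfl
  exacts [α_mem_plane_left, α_mem_plane_right]

lemma plane_comm : G.plane x y c = G.plane y x c := by
  rw [plane, plane, Set.pair_comm]

lemma eq_coord_smul_add_of_mem_plane (hxy : x ≠ y) {β : V} (h : β ∈ G.plane x y c) :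
    β = G.coord c x β • G.α x c + G.coord c y β • G.α y c := by
  obtain ⟨p, q, rfl⟩ := Submodule.mem_span_pair.mp h
  simp [hxy, hxy.symm]

lemma ext_plane (hxy : x ≠ y) {β γ : V} (hβ : β ∈ G.plane x y c) (hγ : γ ∈ G.plane x y c)
    (hx : G.coord c x β = G.coord c x γ) (hy : G.coord c y β = G.coord c y γ) : β = γ := by
  rw [eq_coord_smul_add_of_mem_plane hxy hβ, eq_coord_smul_add_of_mem_plane hxy hγ, hx, hy]

lemma σ_mem_plane {i : N} (hi : i = x ∨ i = y) {β : V} (hβ : β ∈ G.plane x y c) :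
    G.σ i c β ∈ G.plane x y (G.act i c) := by
  rw [mem_plane_iff] at hβ ⊢
  intro n hx hy
  rw [coord_σ_of_ne (by rcases hi with rfl | rfl <;> assumption)]
  exact hβ n hx hy

lemma wmap_mem_plane {l : List N} (hl : l ⊆ [x, y]) {β : V} (hβ : β ∈ G.plane x y c) :
    G.wmap l c β ∈ G.plane x y (G.target l c) := by
  induction l with
  | nil => exact hβ
  | cons i l ih =>
    rw [List.cons_subset] at hl
    exact σ_mem_plane (by simpa using hl.1) (ih hl.2)

lemma wmap_symm_mem_plane {l : List N} (hl : l ⊆ [x, y]) {β : V}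
    (hβ : β ∈ G.plane x y (G.target l c)) : (G.wmap l c).symm β ∈ G.plane x y c := by
  simpa [target_reverse, wmap_reverse] using
    wmap_mem_plane (l := l.reverse) (List.reverse_subset.mpr hl) hβ

lemma wmap_α_sub_mem_plane {l : List N} (hl : l ⊆ [x, y]) {n : N} (hnx : n ≠ x) (hny : n ≠ y) :
    G.wmap l c (G.α n c) - G.α n (G.target l c) ∈ G.plane x y (G.target l c) := by
  induction l with
  | nil => simp
  | cons i l ih =>
    rw [List.cons_subset] at hl
    have hi : i = x ∨ i = y := by simpa using hl.1
    obtain ⟨k, hk⟩ := G.ax5_off i (G.target l c) n (by rcases hi with rfl | rfl <;> assumption)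
    have : G.wmap (i :: l) c (G.α n c) - G.α n (G.target (i :: l) c) =
        G.σ i (G.target l c) (G.wmap l c (G.α n c) - G.α n (G.target l c)) +
          (k : ℝ) • G.α i (G.act i (G.target l c)) := by
      simp only [wmap_cons, target_cons, LinearEquiv.trans_apply, map_sub, hk]
      abel
    rw [this]
    exact add_mem (σ_mem_plane hi (ih hl.2)) (Submodule.smul_mem _ _ (α_mem_plane_of_eq_or hi))

/-- Both `α n + β` and `α n - β` have coefficient `1` at `n`, hence are positive roots. -/
lemma eq_zero_of_α_add_mem_root_of_α_sub_mem_root (hxy : x ≠ y) {n : N} (hnx : n ≠ x)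
    (hny : n ≠ y) {β : V} (hβ : β ∈ G.plane x y c) (hadd : G.α n c + β ∈ G.root c)
    (hsub : G.α n c - β ∈ G.root c) : β = 0 := by
  have key : ∀ γ ∈ G.plane x y c, G.α n c + γ ∈ G.root c →
      0 ≤ G.coord c x γ ∧ 0 ≤ G.coord c y γ := by
    intro γ hγ hroot
    have hγn := mem_plane_iff.mp hγ n hnx hny
    have hpos := mem_pos_of_coord_pos hroot (m := n) (by simp [hγn])
    have hx := coord_nonneg hpos x
    have hy := coord_nonneg hpos y
    simp only [map_add, G.coord_α_of_ne hnx, G.coord_α_of_ne hny, zero_add] at hx hy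
    exact ⟨hx, hy⟩
  obtain ⟨h₁, h₂⟩ := key β hβ hadd
  obtain ⟨h₃, h₄⟩ := key (-β) (neg_mem hβ) (by rwa [← sub_eq_add_neg])
  simp only [map_neg, Left.nonneg_neg_iff] at h₃ h₄
  exact ext_plane hxy hβ (zero_mem _) (by simp only [map_zero]; linarith)
    (by simp only [map_zero]; linarith)

end Plane

section Chain

variable {x y : N} {c : A}

variable (G) in
noncomputable def planeDet (x y : N) (c : A) : V →ₗ[ℝ] V →ₗ[ℝ] ℝ :=
  LinearMap.mk₂ ℝ (fun β γ => G.coord c x β * G.coord c y γ - G.coord c y β * G.coord c x γ)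
    (by intros; simp only [map_add]; ring) (by intros; simp only [map_smul, smul_eq_mul]; ring)
    (by intros; simp only [map_add]; ring) (by intros; simp only [map_smul, smul_eq_mul]; ring)

lemma planeDet_apply (β γ : V) : G.planeDet x y c β γ =
    G.coord c x β * G.coord c y γ - G.coord c y β * G.coord c x γ := rfl

lemma planeDet_swap (β γ : V) : G.planeDet x y c γ β = -G.planeDet x y c β γ := by
  simp only [planeDet_apply]; ring

@[simp] lemma planeDet_self (β : V) : G.planeDet x y c β β = 0 := by
  simp only [planeDet_apply]; ring

lemma planeDet_α (hxy : x ≠ y) : G.planeDet x y c (G.α x c) (G.α y c) = 1 := by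
  simp [planeDet_apply, hxy, hxy.symm]

/-- Cramer's rule in the plane. -/
lemma eq_planeDet_smul_add (hxy : x ≠ y) {β γ δ : V} (hβ : β ∈ G.plane x y c)
    (hγ : γ ∈ G.plane x y c) (hδ : δ ∈ G.plane x y c) (h : G.planeDet x y c γ δ = 1) :
    β = G.planeDet x y c β δ • γ + G.planeDet x y c γ β • δ := by
  rw [planeDet_apply] at h
  refine ext_plane hxy hβ (add_mem (Submodule.smul_mem _ _ hγ) (Submodule.smul_mem _ _ hδ))
    ?_ ?_ <;> simp only [map_add, map_smul, smul_eq_mul, planeDet_apply]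
  · linear_combination (-G.coord c x β) * h
  · linear_combination (-G.coord c y β) * h

variable (G) in
noncomputable def chainRoot (x y : N) (c : A) (r : ℕ) : V :=
  G.inversionRoot (altLetter x y r) (altR x y r) c

@[simp] lemma chainRoot_zero : G.chainRoot x y c 0 = G.α x c := rfl

lemma chainRoot_mem_root (r : ℕ) : G.chainRoot x y c r ∈ G.root c :=
  G.inversionRoot_mem_root _ _ _

lemma chainRoot_mem_plane (r : ℕ) : G.chainRoot x y c r ∈ G.plane x y c :=
  wmap_symm_mem_plane (altR_subset x y r) (α_mem_plane_of_eq_or (altLetter_eq_or x y r))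

lemma wmap_altR_chainRoot (r : ℕ) :
    G.wmap (altR x y r) c (G.chainRoot x y c r) = G.α (altLetter x y r) (G.target (altR x y r) c) :=
  G.wmap_inversionRoot _ _ _

lemma wmap_altR_succ_chainRoot (r : ℕ) :
    G.wmap (altR x y (r + 1)) c (G.chainRoot x y c r) =
      -G.α (altLetter x y r) (G.target (altR x y (r + 1)) c) := by
  simp only [altR_succ_eq_cons, wmap_cons, target_cons, LinearEquiv.trans_apply,
    wmap_altR_chainRoot, G.ax5_diag]

/-- `k` is the Cartan entry given by axiom (5) at the junction. -/
lemma chainRoot_add_two (hxy : x ≠ y) (r : ℕ) : ∃ k : ℕ,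
    G.chainRoot x y c (r + 2) = (k : ℝ) • G.chainRoot x y c (r + 1) - G.chainRoot x y c r := by
  set p := altLetter x y (r + 1)
  set d := G.target (altR x y (r + 1)) c
  obtain ⟨k, hk⟩ := G.ax5_off p (G.act p d) (altLetter x y r) (altLetter_succ_ne hxy r).symm
  refine ⟨k, ?_⟩
  rw [G.act_invol] at hk
  have hη : G.chainRoot x y c (r + 2) =
      (G.wmap (altR x y (r + 1)) c).symm
        (G.σ p (G.act p d) (G.α (altLetter x y r) (G.act p d))) := by
    have : altLetter x y (r + 2) = altLetter x y r := by rw [altLetter_succ, altLetter_succ]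
    rw [chainRoot, inversionRoot, this, altR_succ_eq_cons x y (r + 1)]
    simp only [wmap_cons, target_cons, LinearEquiv.symm_trans_apply, σ_symm]
    rfl
  have hprev : (G.wmap (altR x y (r + 1)) c).symm (G.α (altLetter x y r) d) =
      -G.chainRoot x y c r := by
    rw [LinearEquiv.symm_apply_eq, map_neg, wmap_altR_succ_chainRoot, neg_neg]
  rw [hη, hk, map_add, map_smul, hprev]
  change _ + _ • G.chainRoot x y c (r + 1) = _
  abel

lemma chainRoot_one (hxy : x ≠ y) : ∃ k : ℕ, G.chainRoot x y c 1 = G.α y c + (k : ℝ) • G.α x c := by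
  obtain ⟨k, hk⟩ := G.ax5_off x (G.act x c) y hxy.symm
  refine ⟨k, ?_⟩
  simp [chainRoot, inversionRoot, altR, altLetter, σ_symm, hk, G.act_invol]

lemma planeDet_chainRoot_succ (hxy : x ≠ y) (r : ℕ) :
    G.planeDet x y c (G.chainRoot x y c r) (G.chainRoot x y c (r + 1)) = 1 := by
  induction r with
  | zero =>
    obtain ⟨k, hk⟩ := chainRoot_one (G := G) (c := c) hxy
    simp [hk, planeDet_α hxy]
  | succ r ih =>
    obtain ⟨k, hk⟩ := chainRoot_add_two (G := G) (c := c) hxy r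
    rw [hk, map_sub, map_smul, planeDet_self, planeDet_swap, ih]
    simp

end Chain

section RankTwo

variable {x y : N} {c : A}

variable (G) in
def planePos (x y : N) (c : A) : Set V := G.pos c ∩ G.plane x y c

lemma planePos_comm : G.planePos x y c = G.planePos y x c := by
  rw [planePos, planePos, plane_comm]

/-- `wmap (altR x y (r + 1))` maps `ζ` to a root with coordinates
`-planeDet ζ (chainRoot (r + 1))` and `planeDet (chainRoot r) ζ`, which cannot have opposite
signs. -/
lemma planeDet_chainRoot_succ_pos (hxy : x ≠ y) {r : ℕ} {ζ : V} (hζ : ζ ∈ G.root c)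
    (hζp : ζ ∈ G.plane x y c) (hr : 0 < G.planeDet x y c (G.chainRoot x y c r) ζ)
    (h₁ : ζ ≠ G.chainRoot x y c (r + 1)) (h₂ : ζ ≠ -G.chainRoot x y c (r + 1)) :
    0 < G.planeDet x y c (G.chainRoot x y c (r + 1)) ζ := by
  set s := G.planeDet x y c ζ (G.chainRoot x y c (r + 1))
  set t := G.planeDet x y c (G.chainRoot x y c r) ζ
  set w := G.wmap (altR x y (r + 1)) c
  set d := G.target (altR x y (r + 1)) c
  have hne := altLetter_succ_ne hxy r
  have hw : w ζ = -s • G.α (altLetter x y r) d + t • G.α (altLetter x y (r + 1)) d := by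
    conv_lhs => rw [eq_planeDet_smul_add hxy hζp (chainRoot_mem_plane r)
      (chainRoot_mem_plane (r + 1)) (planeDet_chainRoot_succ hxy r)]
    rw [map_add, map_smul, map_smul, wmap_altR_succ_chainRoot, wmap_altR_chainRoot, smul_neg,
      neg_smul]
  have hroot : w ζ ∈ G.root d := wmap_mem_root hζ
  have hs : s ≤ 0 := by
    by_contra hs
    refine not_coord_neg_of_coord_pos hroot (t := altLetter x y (r + 1))
      (s := altLetter x y r) ?_ ?_
    · simpa [hw, hne.symm] using hr
    · simpa [hw, hne] using hs
  rw [planeDet_swap]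
  refine neg_pos.mpr (hs.lt_of_ne fun hs0 => ?_)
  rw [hs0, neg_zero, zero_smul, zero_add] at hw
  rcases eq_α_or_eq_neg_α hroot hw with h | h
  · exact h₁ (w.injective (by rw [h, wmap_altR_chainRoot]))
  · exact h₂ (w.injective (by rw [h, map_neg, wmap_altR_chainRoot]))

variable [Nonempty N]

lemma planePos_eq_root_inter (hxy : x ≠ y) : G.planePos x y c =
    G.root c ∩ {β | ∃ p q : ℕ, β = (p : ℝ) • G.α x c + (q : ℝ) • G.α y c} := by
  ext β
  constructor
  · rintro ⟨hβ, hβp⟩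
    obtain ⟨p, hp⟩ := exists_coord_eq_nat hβ.2 x
    obtain ⟨q, hq⟩ := exists_coord_eq_nat hβ.2 y
    exact ⟨hβ.1, p, q, hp ▸ hq ▸ eq_coord_smul_add_of_mem_plane hxy hβp⟩
  · rintro ⟨hβ, p, q, rfl⟩
    refine ⟨?_, add_mem (Submodule.smul_mem _ _ α_mem_plane_left)
      (Submodule.smul_mem _ _ α_mem_plane_right)⟩
    rcases Nat.eq_zero_or_pos p with rfl | hp
    · rcases Nat.eq_zero_or_pos q with rfl | hq
      · simp only [Nat.cast_zero, zero_smul, add_zero] at hβ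
        exact absurd hβ (G.zero_notMem_root c)
      · exact mem_pos_of_coord_pos hβ (m := y) (by simpa [hxy] using hq)
    · exact mem_pos_of_coord_pos hβ (m := x) (by simpa [hxy.symm] using hp)

lemma invReduced_altR_iff {m : ℕ} :
    G.InvReduced (altR x y m) c ↔ ∀ r < m, G.chainRoot x y c r ∈ G.pos c := by
  induction m with
  | zero => simp [altR]
  | succ m ih =>
    rw [altR_succ_eq_cons, invReduced_cons_iff, ih]
    exact ⟨fun ⟨h, hm⟩ r hr => (Nat.lt_succ_iff_lt_or_eq.mp hr).elim (h r) (· ▸ hm),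
      fun h => ⟨fun r hr => h r (by omega), h m (by omega)⟩⟩

lemma invSet_altR {m : ℕ} (h : ∀ r < m, G.chainRoot x y c r ∈ G.pos c) :
    G.invSet (altR x y m) c = G.chainRoot x y c '' Set.Iio m := by
  induction m with
  | zero => simp [altR]
  | succ m ih =>
    rw [altR_succ_eq_cons, invSet_cons_of_mem_pos (h m m.lt_succ_self),
      ih fun r hr => h r (by omega), Set.Iio_add_one_eq_Iic, ← Set.Iio_insert,
      Set.image_insert_eq]
    rfl

lemma invSet_altR_subset_planePos {m : ℕ} (h : G.InvReduced (altR x y m) c) :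
    G.invSet (altR x y m) c ⊆ G.planePos x y c := by
  rw [invSet_altR (invReduced_altR_iff.mp h)]
  rintro _ ⟨r, hr, rfl⟩
  exact ⟨invReduced_altR_iff.mp h r hr, chainRoot_mem_plane r⟩

end RankTwo

variable (G) in
/-- The alternating word of length `m` is reduced but cannot be prolonged; `m` is then the number
of positive roots in the plane of `α x c` and `α y c`. -/
def IsAltLongest (x y : N) (c : A) (m : ℕ) : Prop :=
  G.InvReduced (altR x y m) c ∧ G.chainRoot x y c m ∈ -G.pos c

namespace IsAltLongest

variable [Nonempty N] {x y : N} {c : A} {m : ℕ}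

lemma chainRoot_mem_pos (h : G.IsAltLongest x y c m) {r : ℕ} (hr : r < m) :
    G.chainRoot x y c r ∈ G.pos c :=
  invReduced_altR_iff.mp h.1 r hr

lemma one_le (h : G.IsAltLongest x y c m) : 1 ≤ m := by
  rcases Nat.eq_zero_or_pos m with rfl | hm
  · exact absurd h.2 (notMem_neg_pos (G.α_mem_pos c x))
  · exact hm

lemma invSet_eq (h : G.IsAltLongest x y c m) :
    G.invSet (altR x y m) c = G.chainRoot x y c '' Set.Iio m :=
  invSet_altR (invReduced_altR_iff.mp h.1)

/-- A positive root `ζ` of the plane outside the chain would stay on the positive side of every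
`chainRoot r`, `r ≤ m`, while `chainRoot m` is the negative of an earlier chain root. -/
lemma planePos_eq (h : G.IsAltLongest x y c m) (hxy : x ≠ y) :
    G.planePos x y c = G.invSet (altR x y m) c := by
  refine Set.Subset.antisymm (fun ζ hζ => ?_) (invSet_altR_subset_planePos h.1)
  by_contra hnot
  have hne : ∀ s ≤ m, ζ ≠ G.chainRoot x y c s ∧ ζ ≠ -G.chainRoot x y c s := by
    intro s hs
    rcases hs.lt_or_eq with hs | rfl
    · refine ⟨fun he => hnot (h.invSet_eq ▸ he ▸ ⟨s, hs, rfl⟩), fun he => ?_⟩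
      exact notMem_neg_pos hζ.1 (he ▸ Set.neg_mem_neg.mpr (h.chainRoot_mem_pos hs))
    · exact ⟨fun he => notMem_neg_pos hζ.1 (he ▸ h.2),
        fun he => hnot (he ▸ neg_inversionRoot_mem_invSet h.2)⟩
  have hpos : ∀ r ≤ m, 0 < G.planeDet x y c (G.chainRoot x y c r) ζ := by
    intro r hr
    induction r with
    | zero =>
      have hdet : G.planeDet x y c (G.α x c) ζ = G.coord c y ζ := by
        simp [planeDet_apply, hxy]
      rw [chainRoot_zero, hdet]
      refine (coord_nonneg hζ.1 y).lt_of_ne' fun hy => ?_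
      have hζx := eq_coord_smul_add_of_mem_plane hxy hζ.2
      rw [hy, zero_smul, add_zero] at hζx
      rcases eq_α_or_eq_neg_α hζ.1.1 hζx with he | he
      exacts [(hne 0 m.zero_le).1 he, (hne 0 m.zero_le).2 he]
    | succ r ih =>
      exact planeDet_chainRoot_succ_pos hxy hζ.1.1 hζ.2 (ih (by omega)) (hne _ hr).1 (hne _ hr).2
  obtain ⟨q, hq, hqm⟩ : -G.chainRoot x y c m ∈ G.chainRoot x y c '' Set.Iio m :=
    h.invSet_eq ▸ neg_inversionRoot_mem_invSet h.2
  have hq' := hpos q (Set.mem_Iio.mp hq).le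
  have hm := hpos m le_rfl
  rw [← neg_neg (G.chainRoot x y c m), ← hqm, map_neg, LinearMap.neg_apply] at hm
  linarith

lemma ncard_planePos (h : G.IsAltLongest x y c m) (hxy : x ≠ y) : (G.planePos x y c).ncard = m := by
  rw [h.planePos_eq hxy]
  exact h.1.trans (length_altR x y m)

lemma planePos_finite (h : G.IsAltLongest x y c m) (hxy : x ≠ y) : (G.planePos x y c).Finite := by
  rw [h.planePos_eq hxy]
  exact G.invSet_finite _ _

lemma chainRoot_pred (h : G.IsAltLongest x y c m) (hxy : x ≠ y) :
    G.chainRoot x y c (m - 1) = G.α y c := by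
  have hy : G.α y c ∈ G.invSet (altR x y m) c :=
    h.planePos_eq hxy ▸ ⟨G.α_mem_pos c y, α_mem_plane_right⟩
  rw [h.invSet_eq] at hy
  obtain ⟨t, ht, hty⟩ := hy
  rw [Set.mem_Iio] at ht
  obtain rfl | hlt : t = m - 1 ∨ t + 1 < m := by omega
  · exact hty
  · have hdet := planeDet_chainRoot_succ (G := G) (c := c) hxy t
    rw [hty, planeDet_apply] at hdet
    simp only [G.coord_α_of_ne hxy.symm, coord_α_self, zero_mul, one_mul, zero_sub] at hdet
    linarith [coord_nonneg (h.chainRoot_mem_pos hlt) x]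

lemma wmap_α_right (h : G.IsAltLongest x y c m) (hxy : x ≠ y) :
    G.wmap (altR x y m) c (G.α y c) = -G.α (altLetter x y (m - 1)) (G.target (altR x y m) c) := by
  have := wmap_altR_succ_chainRoot (G := G) (x := x) (y := y) (c := c) (m - 1)
  rwa [Nat.sub_add_cancel h.one_le, h.chainRoot_pred hxy] at this

lemma reverse (h : G.IsAltLongest x y c m) (hxy : x ≠ y) :
    G.IsAltLongest (altLetter y x m) (altLetter x y m) (G.target (altR x y m) c) m := by
  have hrev := h.1.reverse
  rw [reverse_altR] at hrev
  refine ⟨hrev, ?_⟩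
  rw [chainRoot, inversionRoot, ← reverse_altR, wmap_reverse, target_reverse,
    LinearEquiv.symm_symm, ← altLetter_add, altLetter_add_self, h.wmap_α_right hxy]
  exact G.neg_α_mem_neg_pos _ _

lemma wmap_α_left (h : G.IsAltLongest x y c m) (hxy : x ≠ y) :
    G.wmap (altR x y m) c (G.α x c) = -G.α (altLetter x y m) (G.target (altR x y m) c) := by
  have hne : altLetter y x m ≠ altLetter x y m := altLetter_succ x y m ▸ altLetter_succ_ne hxy m
  have := (h.reverse hxy).wmap_α_right hne
  rw [← reverse_altR, wmap_reverse, target_reverse, ← altLetter_add,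
    show m - 1 + m = m - 1 + (m - 1) + 1 by have := h.one_le; omega, altLetter_succ,
    altLetter_add_self, LinearEquiv.symm_apply_eq, map_neg] at this
  rw [this, neg_neg]

end IsAltLongest

section Braid

variable {x y : N} {c : A}

/-- `u = (wmap l')⁻¹ ∘ wmap l` fixes the plane and moves `α n` by a plane vector `τ`, so that
`α n + τ = u (α n)` and `α n - τ = u⁻¹ (α n)` are both roots. -/
lemma wmap_α_eq_of_eq_on_plane (hxy : x ≠ y) {l l' : List N} (hl : l ⊆ [x, y])
    (hl' : l' ⊆ [x, y]) (ht : G.target l' c = G.target l c)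
    (hx : G.wmap l' c (G.α x c) = G.wmap l c (G.α x c))
    (hy : G.wmap l' c (G.α y c) = G.wmap l c (G.α y c)) (n : N) :
    G.wmap l' c (G.α n c) = G.wmap l c (G.α n c) := by
  by_cases hnx : n = x
  · exact hnx ▸ hx
  by_cases hny : n = y
  · exact hny ▸ hy
  set u := (G.wmap l c).trans (G.wmap l' c).symm
  have hfix : ∀ β ∈ G.plane x y c, u β = β := by
    intro β hβ
    obtain ⟨p, q, rfl⟩ := Submodule.mem_span_pair.mp hβ
    simp [u, ← hx, ← hy]
  have hroot : ∀ β ∈ G.root c, u β ∈ G.root c ∧ u.symm β ∈ G.root c := fun β hβ =>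
    ⟨wmap_symm_mem_root (ht ▸ wmap_mem_root hβ), wmap_symm_mem_root (ht.symm ▸ wmap_mem_root hβ)⟩
  set τ := u (G.α n c) - G.α n c with hτdef
  have hτ : τ ∈ G.plane x y c := by
    have h₁ := wmap_α_sub_mem_plane (G := G) (c := c) hl hnx hny
    have h₂ := wmap_α_sub_mem_plane (G := G) (c := c) hl' hnx hny
    rw [ht] at h₂
    have : τ = (G.wmap l' c).symm (G.wmap l c (G.α n c) - G.α n (G.target l c)) -
        (G.wmap l' c).symm (G.wmap l' c (G.α n c) - G.α n (G.target l c)) := by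
      simp [τ, u]
    rw [this]
    exact sub_mem (wmap_symm_mem_plane hl' (ht ▸ h₁)) (wmap_symm_mem_plane hl' (ht ▸ h₂))
  have hsub : G.α n c - τ = u.symm (G.α n c) := by
    rw [LinearEquiv.eq_symm_apply, map_sub, hfix τ hτ, hτdef]
    abel
  have hτ0 := eq_zero_of_α_add_mem_root_of_α_sub_mem_root hxy hnx hny hτ
    (by simpa [τ] using (hroot _ (G.α_mem n c)).1) (hsub ▸ (hroot _ (G.α_mem n c)).2)
  have : u (G.α n c) = G.α n c := sub_eq_zero.mp hτ0
  rwa [LinearEquiv.trans_apply, LinearEquiv.symm_apply_eq, eq_comm] at this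

namespace IsAltLongest

variable [Nonempty N] {m : ℕ}

/-- The alternating words in `y`, `x` of length at most `m` are reduced, as otherwise the plane
would have fewer than `m` positive roots, and the one of length `m + 1` is not, as then it would
have more. -/
lemma swap (h : G.IsAltLongest x y c m) (hxy : x ≠ y) : G.IsAltLongest y x c m := by
  have hcard := h.ncard_planePos hxy
  have hfin := h.planePos_finite hxy
  rw [planePos_comm] at hcard hfin
  have hred : ∀ r ≤ m, G.InvReduced (altR y x r) c := by
    intro r hr
    induction r with
    | zero => simp [altR]
    | succ r ih =>
      have ih := ih (by omega)
      rw [altR_succ_eq_cons, invReduced_cons_iff]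
      refine ⟨ih, (mem_pos_or_mem_neg_pos (chainRoot_mem_root r)).resolve_right fun hneg => ?_⟩
      have := IsAltLongest.ncard_planePos (G := G) ⟨ih, hneg⟩ hxy.symm
      omega
  refine ⟨hred m le_rfl, (mem_pos_or_mem_neg_pos (chainRoot_mem_root m)).resolve_left
    fun hpos => ?_⟩
  have hred' : G.InvReduced (altR y x (m + 1)) c := by
    rw [altR_succ_eq_cons, invReduced_cons_iff]
    exact ⟨hred m le_rfl, hpos⟩
  have := Set.ncard_le_ncard (invSet_altR_subset_planePos hred') hfin
  rw [hred', hcard, length_altR] at this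
  omega

/-- By axiom (7), the number `m` of positive roots of the plane is a multiple of the period of `c`
under `x y`. -/
lemma target_swap (h : G.IsAltLongest x y c m) (hxy : x ≠ y) :
    G.target (altR y x m) c = G.target (altR x y m) c := by
  have hfin := h.planePos_finite hxy
  have hcard := h.ncard_planePos hxy
  rw [planePos_eq_root_inter hxy] at hfin hcard
  have hdvd := (G.ax7 c x y hxy hfin).2
  rw [hcard] at hdvd
  have hper := congrArg (G.target (altR x y m)) <|
    (G.target_altR_add_self x y c m).trans (altIter_eq_self_of_ncard_thetaSet_dvd G.act_invol hdvd)
  rwa [altR_add, ← reverse_altR, target_append, target_target_reverse] at hper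

lemma wmap_swap (h : G.IsAltLongest x y c m) (hxy : x ≠ y) :
    G.wmap (altR y x m) c = G.wmap (altR x y m) c := by
  have h' := h.swap hxy
  have ht := h.target_swap hxy
  have hm := h.one_le
  have hletter : altLetter x y m = altLetter y x (m - 1) := by
    conv_lhs => rw [← Nat.sub_add_cancel hm, altLetter_succ]
  have hletter' : altLetter y x m = altLetter x y (m - 1) := by
    conv_lhs => rw [← Nat.sub_add_cancel hm, altLetter_succ]
  refine LinearEquiv.toLinearMap_injective <| (G.simpleBasis c).ext fun n => ?_
  simp only [LinearEquiv.coe_coe, simpleBasis_apply]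
  refine wmap_α_eq_of_eq_on_plane hxy (altR_subset x y m)
    (fun z hz => by simpa [or_comm] using altR_subset y x m hz) ht ?_ ?_ n
  · rw [h'.wmap_α_right hxy.symm, h.wmap_α_left hxy, ht, hletter]
  · rw [h'.wmap_α_left hxy.symm, h.wmap_α_right hxy, ht, hletter']

lemma eqv_cons (h : G.IsAltLongest x y c m) (hxy : x ≠ y) :
    G.Eqv c (altR x y m) (altLetter x y m :: altR y x (m - 1)) := by
  have hw : altR y x m = altLetter x y m :: altR y x (m - 1) := by
    conv_lhs => rw [← Nat.sub_add_cancel h.one_le, altR_succ_eq_cons, ← altLetter_succ,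
      Nat.sub_add_cancel h.one_le]
  exact hw ▸ ⟨h.target_swap hxy, h.wmap_swap hxy⟩

end IsAltLongest

end Braid

section Exchange

variable [Nonempty N]

/-- The pull-back of `β` is `p • inversionRoot u t a + q • inversionRoot v t a` with `p q : ℕ`. -/
lemma inversionRoot_mem_neg_pos_of_planePos {u v : N} (huv : u ≠ v) {t : List N} {a : A}
    (hu : G.inversionRoot u t a ∈ G.pos a) {β : V} (hβ : β ∈ G.planePos u v (G.target t a))
    (hneg : (G.wmap t a).symm β ∈ -G.pos a) : G.inversionRoot v t a ∈ -G.pos a := by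
  refine (mem_pos_or_mem_neg_pos (G.inversionRoot_mem_root v t a)).resolve_left fun hv => ?_
  obtain ⟨p, hp⟩ := exists_coord_eq_nat hβ.1.2 u
  obtain ⟨q, hq⟩ := exists_coord_eq_nat hβ.1.2 v
  have hcomb : (G.wmap t a).symm β =
      (p : ℝ) • G.inversionRoot u t a + (q : ℝ) • G.inversionRoot v t a := by
    conv_lhs => rw [eq_coord_smul_add_of_mem_plane huv hβ.2, hp, hq]
    rw [map_add, map_smul, map_smul]
    rfl
  exact notMem_neg_pos (mem_pos_of_nat_smul_add (wmap_symm_mem_root hβ.1.1) hu hv hcomb) hneg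

/-- If the chain root of the alternating prefix at the junction is negative, the braid relation
applies to the prefix; otherwise the exchange condition for `t` moves one more letter into the
alternating prefix. -/
lemma exchange_altR_append {k : ℕ}
    (ih : ∀ (s : List N) (a : A) (i : N), s.length < k → G.InvReduced s a →
      G.inversionRoot i s a ∈ -G.pos a → ∃ s', s'.length < s.length ∧ G.Eqv a s (i :: s'))
    {u v : N} (huv : u ≠ v) {r : ℕ} (hr : 1 ≤ r) {t : List N} {a : A} (hk : r + t.length = k)
    (hred : G.InvReduced (altR u v r ++ t) a)
    (hneg : G.inversionRoot (altLetter u v r) (altR u v r ++ t) a ∈ -G.pos a) :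
    ∃ s', s'.length < k ∧ G.Eqv a (altR u v r ++ t) (altLetter u v r :: s') := by
  obtain ⟨n, hn⟩ : ∃ n, t.length = n := ⟨_, rfl⟩
  induction n using Nat.strong_induction_on generalizing u v r t with
  | _ n ihn =>
  have hjunction := hneg
  rw [inversionRoot_append] at hjunction
  rcases mem_pos_or_mem_neg_pos (chainRoot_mem_root (x := u) (y := v) (c := G.target t a) r)
    with hpos | hjneg
  · have hu : G.inversionRoot u t a ∈ G.pos a := by
      have hsplit : altR u v r ++ t = altR v u (r - 1) ++ u :: t := by
        conv_lhs => rw [← Nat.sub_add_cancel hr]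
        simp [altR]
      rw [hsplit] at hred
      exact (invReduced_cons_iff.mp hred.suffix).2
    have hv := inversionRoot_mem_neg_pos_of_planePos huv hu ⟨hpos, chainRoot_mem_plane r⟩ hjunction
    obtain ⟨t', ht', he⟩ := ih t a v (by omega) hred.suffix hv
    have he' : G.Eqv a (altR u v r ++ t) (altR v u (r + 1) ++ t') := by
      simpa [altR] using he.append_left (altR u v r)
    have hlen := hred.length_le he'
    simp only [List.length_append, length_altR] at hlen
    obtain ⟨s', hs', he''⟩ := ihn t'.length (by omega) huv.symm (by omega) (by omega)
      (hred.of_eqv he' (by simp; omega)) (by rw [he'.inversionRoot_eq, altLetter_succ]; exact hneg)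
      rfl
    rw [altLetter_succ] at he''
    exact ⟨s', hs', he'.trans he''⟩
  · refine ⟨altR v u (r - 1) ++ t, by simp; omega, ?_⟩
    exact (IsAltLongest.eqv_cons ⟨hred.prefix, hjneg⟩ huv).append_right t

theorem exchange {s : List N} {a : A} {i : N} (hs : G.InvReduced s a)
    (hi : G.inversionRoot i s a ∈ -G.pos a) : ∃ s', s'.length < s.length ∧ G.Eqv a s (i :: s') := by
  obtain ⟨k, hk⟩ : ∃ k, s.length = k := ⟨_, rfl⟩
  induction k using Nat.strong_induction_on generalizing s a i with
  | _ k ih =>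
  match s, hs, hi, hk with
  | [], _, hi, _ => exact absurd hi (notMem_neg_pos (G.α_mem_pos a i))
  | j :: t, hs, hi, hk =>
    rcases eq_or_ne i j with rfl | hij
    · exact ⟨t, by simp, Eqv.refl a _⟩
    · refine exchange_altR_append (fun s' a' i' hlt hs' hi' => ?_) hij.symm le_rfl
        (by simp only [List.length_cons]; omega) hs hi
      exact ih _ (hk ▸ hlt) (s := s') (a := a') (i := i') hs' hi' rfl

lemma exists_shorter_eqv_of_not_invReduced {l : List N} {a : A} (h : ¬ G.InvReduced l a) :
    ∃ l', l'.length < l.length ∧ G.Eqv a l l' := by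
  obtain ⟨pre, i, t, rfl, ht, hi⟩ := exists_eq_append_of_not_invReduced h
  obtain ⟨t', ht', he⟩ := exchange ht hi
  refine ⟨pre ++ t', by simp; omega, ?_⟩
  exact ((he.append_left [i]).trans (G.eqv_cons_cons a i t')).append_left pre

lemma exists_eqv_length_eq_ncard_invSet (l : List N) (a : A) :
    ∃ l', G.Eqv a l l' ∧ l'.length = (G.invSet l a).ncard := by
  obtain ⟨k, hk⟩ : ∃ k, l.length = k := ⟨_, rfl⟩
  induction k using Nat.strong_induction_on generalizing l with
  | _ k ih =>
  by_cases h : G.InvReduced l a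
  · exact ⟨l, Eqv.refl a l, h.symm⟩
  · obtain ⟨l₁, hl₁, he₁⟩ := exists_shorter_eqv_of_not_invReduced h
    obtain ⟨l₂, he₂, hl₂⟩ := ih _ (hk ▸ hl₁) l₁ rfl
    exact ⟨l₂, he₁.trans he₂, hl₂.trans (congrArg _ he₁.invSet_eq)⟩

theorem len_eq_ncard_invSet (l : List N) (a : A) : G.len l a = (G.invSet l a).ncard := by
  refine le_antisymm ?_ (le_csInf ⟨l.length, l, rfl, rfl, rfl⟩ ?_)
  · obtain ⟨l', he, hl'⟩ := exists_eqv_length_eq_ncard_invSet (G := G) l a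
    exact Nat.sInf_le ⟨l', hl', he⟩
  · rintro _ ⟨l', rfl, he⟩
    exact (Eqv.invSet_eq (l := l) he) ▸ G.ncard_invSet_le_length l' a

end Exchange

end GRS

theorem stmt12_general [Nonempty N] (G : GRS N A) (l : List N) (a : A) :
    (⇑(G.wmap l a) '' G.pos a ∩ -G.pos (G.target l a)).Finite ∧
    G.len l a = (⇑(G.wmap l a) '' G.pos a ∩ -G.pos (G.target l a)).ncard := by
  have himg : ⇑(G.wmap l a) '' G.pos a ∩ -G.pos (G.target l a) = ⇑(G.wmap l a) '' G.invSet l a :=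
    (Set.image_inter_preimage _ _ _).symm
  rw [himg, Set.ncard_image_of_injective _ (G.wmap l a).injective]
  exact ⟨(G.invSet_finite l a).image _, G.len_eq_ncard_invSet l a⟩

/-- Lemma (iii): `ℓ(w) = |w(R⁺_a) ∩ (−R⁺_b)|`. -/
theorem stmt12 [Nonempty N] [Nonempty A] (G : GRS N A) (l : List N) (hl : l ≠ [])
    (a : A) :
    (⇑(G.wmap l a) '' G.pos a ∩ -G.pos (G.target l a)).Finite ∧
    G.len l a = (⇑(G.wmap l a) '' G.pos a ∩ -G.pos (G.target l a)).ncard :=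
  stmt12_general G l a
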